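/- Let ν be a probability mass function on 𝒳 satisfying |ν(a) − μ0(a)| < δ for all a ∈ 𝒳, where 0 < δ < p_min = min_{a∈𝒳} μ0(a) and β = p_min/(p_min − δ); let ε0 ∈ (0,1) bound the probability that the empirical distribution of the first n0 samples deviates from μ0 by at least δ in some coordinate. For γ > 1 and λ > log β, define M(γ) = inf{ n ≥ 1 : max_{1 ≤ k ≤ n} ( −L(Y_k^n) − log ν(Y_k^n) − nλ ) ≥ log γ }, where Y_1, Y_2, … are the observations after the training segment. Then under the no-change hypothesis, E_0(M(γ)) ≥ γ / ( 1/(2^{λ − log β} − 1) + ε0 γ ). -/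

import Mathlib

open MeasureTheory Filter
open scoped ENNReal NNReal Topology BigOperators Classical

namespace ChangeDetect

variable {𝒳 : Type} [Fintype 𝒳] [Nonempty 𝒳] [MeasurableSpace 𝒳]

/-- A probability mass function on `𝒳`. -/
def IsPMF (p : 𝒳 → ℝ) : Prop := (∀ a, 0 ≤ p a) ∧ ∑ a, p a = 1

/-- A probability mass function on `𝒳` with full support. -/
def IsPosPMF (p : 𝒳 → ℝ) : Prop := (∀ a, 0 < p a) ∧ ∑ a, p a = 1

/-- `L` is a family of length functions of fixed-to-variable prefix codes,
i.e. it satisfies Kraft's inequality for each block length `n`. -/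
def Kraft (L : (n : ℕ) → (Fin n → 𝒳) → ℕ) : Prop :=
  ∀ n : ℕ, ∑ w : Fin n → 𝒳, (2 : ℝ) ^ (-(L n w : ℝ)) ≤ 1

/-- i.i.d. (memoryless) probability of a word. -/
noncomputable def wp (p : 𝒳 → ℝ) {n : ℕ} (w : Fin n → 𝒳) : ℝ := ∏ i, p (w i)

/-- Strong universality of the code `L`:
`R_L^n = sup_μ max_w (L(w) + log₂ μ(w)) = o(n)`, the sup over memoryless sources. -/
def StronglyUniversal (L : (n : ℕ) → (Fin n → 𝒳) → ℕ) : Prop :=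
  ∃ R : ℕ → ℝ, Tendsto (fun n => R n / n) atTop (𝓝 0) ∧
    ∀ (n : ℕ) (μ : 𝒳 → ℝ), IsPosPMF μ → ∀ w : Fin n → 𝒳,
      (L n w : ℝ) + Real.logb 2 (wp μ w) ≤ R n

/-- Kullback–Leibler divergence in bits between two pmfs on `𝒳`. -/
noncomputable def D (p q : 𝒳 → ℝ) : ℝ := ∑ a, p a * Real.logb 2 (p a / q a)

/-- The word `x_{s+1}, …, x_{s+n}` of the sequence `x`. -/
def seg (x : ℕ → 𝒳) (s n : ℕ) : Fin n → 𝒳 := fun i => x (s + (i : ℕ))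

/-- `P` is the joint law of a sequence of independent observations with `X_{i+1} ∼ ps i`
(characterized by its values on cylinder sets). -/
def IsProductLaw (ps : ℕ → 𝒳 → ℝ) (P : Measure (ℕ → 𝒳)) : Prop :=
  IsProbabilityMeasure P ∧
    ∀ (n : ℕ) (w : Fin n → 𝒳),
      P {x | ∀ i : Fin n, x (i : ℕ) = w i} = ∏ i : Fin n, ENNReal.ofReal (ps (i : ℕ) (w i))

/-- `P` is the law of an i.i.d. sequence with marginal pmf `p`. -/
def IsIIDLaw (p : 𝒳 → ℝ) (P : Measure (ℕ → 𝒳)) : Prop := IsProductLaw (fun _ => p) P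

/-- The one-sided test statistic `−L(x_{s+1}^{s+n}) − log₂ ν(x_{s+1}^{s+n}) − nλ`. -/
noncomputable def stat (L : (n : ℕ) → (Fin n → 𝒳) → ℕ) (ν : 𝒳 → ℝ) (lam : ℝ)
    (s : ℕ) (x : ℕ → 𝒳) (n : ℕ) : ℝ :=
  -(L n (seg x s n) : ℝ) - Real.logb 2 (wp ν (seg x s n)) - n * lam

/-- The auxiliary stopping time
`N(α) = inf {n ≥ 1 : −L(x_{s+1}^{s+n}) − log₂ ν(x_{s+1}^{s+n}) − nλ ≥ −log₂ α}`
(`⊤` if the set is empty). -/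
noncomputable def Naux (L : (n : ℕ) → (Fin n → 𝒳) → ℕ) (ν : 𝒳 → ℝ) (lam α : ℝ)
    (s : ℕ) (x : ℕ → 𝒳) : ℕ∞ :=
  sInf {m : ℕ∞ | ∃ n : ℕ, m = n ∧ 1 ≤ n ∧ -Real.logb 2 α ≤ stat L ν lam s x n}

/-- The CUSUM statistic `−L(x_{s+k+1}^{s+n}) − log₂ ν(x_{s+k+1}^{s+n}) − nλ`
(here `0 ≤ k < n`, corresponding to the 1-indexed segment `x_{k+1}^{n}` after `s`
training samples). -/
noncomputable def cstat (L : (n : ℕ) → (Fin n → 𝒳) → ℕ) (ν : 𝒳 → ℝ) (lam : ℝ)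
    (s : ℕ) (x : ℕ → 𝒳) (k n : ℕ) : ℝ :=
  -(L (n - k) (seg x (s + k) (n - k)) : ℝ)
    - Real.logb 2 (wp ν (seg x (s + k) (n - k))) - n * lam

/-- The CUSUM stopping time
`M(γ) = inf {n ≥ 1 : max_{1 ≤ k ≤ n} (−L(x_k^n) − log₂ ν(x_k^n) − nλ) ≥ log₂ γ}`. -/
noncomputable def Mstop (L : (n : ℕ) → (Fin n → 𝒳) → ℕ) (ν : 𝒳 → ℝ) (lam γ : ℝ)
    (s : ℕ) (x : ℕ → 𝒳) : ℕ∞ :=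
  sInf {m : ℕ∞ | ∃ n : ℕ, m = n ∧ 1 ≤ n ∧ ∃ k < n, Real.logb 2 γ ≤ cstat L ν lam s x k n}

/-- Expectation of an (extended) stopping time. -/
noncomputable def lexp (P : Measure (ℕ → 𝒳)) (N : (ℕ → 𝒳) → ℕ∞) : ℝ≥0∞ :=
  ∫⁻ x, (N x : ℝ≥0∞) ∂P

/-- The σ-algebra generated by the first `m` coordinates. -/
def firstCoords (𝒳 : Type) [MeasurableSpace 𝒳] (m : ℕ) : MeasurableSpace (ℕ → 𝒳) :=
  MeasurableSpace.comap (fun x => (fun i : Fin m => x (i : ℕ))) inferInstance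

/-- An (extended) stopping variable of the observation sequence. -/
def IsSeqStoppingTime (N : (ℕ → 𝒳) → ℕ∞) : Prop :=
  ∀ n : ℕ, MeasurableSet[firstCoords 𝒳 n] {x | N x ≤ (n : ℕ∞)}

/-- Lorden's worst-case expected delay
`Ē₁(N) = sup_{m ≥ 1} ess sup E_m[(N − m + 1)⁺ | X_1, …, X_{m−1}]`,
where under `P_m` the first `m − 1` observations are i.i.d. with the pre-change law
(the full i.i.d. pre-change law is `P0`) and the observations from time `m` on are
i.i.d. with the post-change law (full i.i.d. law `P1`).  The conditional expectation
given `X_1, …, X_{m−1}` is realized by integrating out the coordinates from `m` on. -/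
noncomputable def lordenE1 (P0 P1 : Measure (ℕ → 𝒳)) (N : (ℕ → 𝒳) → ℕ∞) : ℝ≥0∞ :=
  ⨆ m : ℕ, essSup
    (fun x => ∫⁻ y, ((N (fun i => if i < m then x i else y i) : ℝ≥0∞) - m) ∂P1) P0

/-- Empirical distribution of the first `n0` samples of the sequence `x`. -/
noncomputable def emp (n0 : ℕ) (x : ℕ → 𝒳) (a : 𝒳) : ℝ :=
  ((Finset.range n0).filter (fun i => x i = a)).card / n0

/-- The optimal worst-case delay over all stopping times with `E₀(S) ≥ γ`
(Lorden's class `S_γ`). -/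
noncomputable def minDelay (P0 P1 : Measure (ℕ → 𝒳)) (γ : ℝ) : ℝ≥0∞ :=
  sInf {r : ℝ≥0∞ | ∃ N : (ℕ → 𝒳) → ℕ∞, IsSeqStoppingTime N ∧
    ENNReal.ofReal γ ≤ lexp P0 N ∧ r = lordenE1 P0 P1 N}


end ChangeDetect

/-!
Put `r = β 2^{-λ} < 1`. Whenever the training estimate `ν` satisfies `μ0 ≤ β ν`, Kraft's
inequality bounds the `μ0`-probability that a block of `m` fresh observations drives the
one-sided statistic over `log γ` by `r^m / γ`. An alarm by time `n` needs either a bad training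
estimate (probability at most `ε0`) or, for some `k < n` with no alarm up to time `k`, such a
crossing block starting right after `k`; that block is independent of the first `n0 + k`
observations. Hence `P(M ≤ n) ≤ ε0 + (∑_{k<n} P(M > k)) K / γ` with
`K = r / (1 - r) = 1 / (2^{λ - log β} - 1)`. Letting `n → ∞` gives `1 ≤ ε0 + E(M) K / γ`, and
together with `E(M) ≥ 1` this is the bound.
-/

namespace ChangeDetect

open Set

variable {𝒳 : Type}

def take (d : ℕ) (x : ℕ → 𝒳) : Fin d → 𝒳 := fun i => x i

noncomputable def extend [Nonempty 𝒳] {d : ℕ} (u : Fin d → 𝒳) : ℕ → 𝒳 :=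
  fun i => if h : i < d then u ⟨i, h⟩ else Classical.arbitrary 𝒳

lemma DependsOn.apply_extend_take [Nonempty 𝒳] {β : Type*} {f : (ℕ → 𝒳) → β} {d : ℕ}
    (hf : DependsOn f (Iio d)) (x : ℕ → 𝒳) : f (extend (take d x)) = f x :=
  hf fun _ hi => dif_pos hi

lemma DependsOn.preimage_take [Nonempty 𝒳] {A : Set (ℕ → 𝒳)} {d : ℕ}
    (hA : DependsOn (· ∈ A) (Iio d)) : take d ⁻¹' {u | extend u ∈ A} = A :=
  Set.ext fun x => eq_iff_iff.mp (DependsOn.apply_extend_take hA x)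

lemma dependsOn_seg (s n : ℕ) : DependsOn (fun x : ℕ → 𝒳 => seg x s n) (Iio (s + n)) :=
  fun _ _ h => funext fun i => h _ (by simp)

lemma dependsOn_emp (n0 : ℕ) : DependsOn (emp (𝒳 := 𝒳) n0) (Iio n0) := by
  intro x y h
  funext a
  unfold emp
  congr 3
  exact Finset.filter_congr fun i hi => by rw [h i (by simpa using hi)]

lemma wp_append (ν : 𝒳 → ℝ) {a b : ℕ} (v : Fin a → 𝒳) (w : Fin b → 𝒳) :
    wp ν (Fin.append v w) = wp ν v * wp ν w := by
  simp [wp, Fin.prod_univ_add]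

lemma wp_nonneg {ν : 𝒳 → ℝ} (hν : ∀ a, 0 ≤ ν a) {n : ℕ} (w : Fin n → 𝒳) : 0 ≤ wp ν w :=
  Finset.prod_nonneg fun i _ => hν (w i)

lemma wp_pos {ν : 𝒳 → ℝ} (hν : ∀ a, 0 < ν a) {n : ℕ} (w : Fin n → 𝒳) : 0 < wp ν w :=
  Finset.prod_pos fun i _ => hν (w i)

lemma wp_le_pow_mul_wp {μ ν : 𝒳 → ℝ} {β : ℝ} (hμ : ∀ a, 0 ≤ μ a) (hμν : ∀ a, μ a ≤ β * ν a)
    {n : ℕ} (w : Fin n → 𝒳) : wp μ w ≤ β ^ n * wp ν w := by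
  rw [wp, wp, ← Fin.prod_const, ← Finset.prod_mul_distrib]
  exact Finset.prod_le_prod (fun i _ => hμ (w i)) (fun i _ => hμν (w i))

section IID

variable [Fintype 𝒳]

lemma IsPMF.sum_wp {μ : 𝒳 → ℝ} (hμ : IsPMF μ) (d : ℕ) : ∑ u : Fin d → 𝒳, wp μ u = 1 := by
  simp [wp, ← Fintype.sum_pow, hμ.2]

variable [MeasurableSpace 𝒳] {μ : 𝒳 → ℝ} {P : Measure (ℕ → 𝒳)}

lemma IsIIDLaw.measure_take_preimage_le (hP : IsIIDLaw μ P) (hμ : ∀ a, 0 ≤ μ a) {d : ℕ}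
    (S : Set (Fin d → 𝒳)) :
    P (take d ⁻¹' S) ≤ ∑ u, S.indicator (fun u => ENNReal.ofReal (wp μ u)) u := by
  have hcover : take d ⁻¹' S ⊆
      ⋃ u ∈ Finset.univ.filter (· ∈ S), {x : ℕ → 𝒳 | ∀ i : Fin d, x i = u i} :=
    fun x hx => mem_biUnion (Finset.mem_filter.mpr ⟨Finset.mem_univ _, hx⟩) fun _ => rfl
  refine (measure_mono hcover).trans <| (measure_biUnion_finset_le _ _).trans (le_of_eq ?_)
  rw [Finset.sum_filter]
  refine Finset.sum_congr rfl fun u _ => ?_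
  rw [hP.2, ← ENNReal.ofReal_prod_of_nonneg fun i _ => hμ (u i), indicator_apply]
  rfl

/-- The cylinder sets need not be measurable (the σ-algebra on `𝒳` is arbitrary), so the
lower bound comes from `P univ ≤ P A + P Aᶜ` applied to the upper bounds for `S` and `Sᶜ`. -/
lemma IsIIDLaw.measure_take_preimage (hP : IsIIDLaw μ P) (hμ : IsPMF μ) {d : ℕ}
    (S : Set (Fin d → 𝒳)) :
    P (take d ⁻¹' S) = ∑ u, S.indicator (fun u => ENNReal.ofReal (wp μ u)) u := by
  have := hP.1
  have htotal : ∑ u, S.indicator (fun u => ENNReal.ofReal (wp μ u)) u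
      + ∑ u, Sᶜ.indicator (fun u => ENNReal.ofReal (wp μ u)) u = 1 := by
    simp_rw [← Finset.sum_add_distrib, indicator_self_add_compl_apply,
      ← ENNReal.ofReal_sum_of_nonneg fun u _ => wp_nonneg hμ.1 u, hμ.sum_wp, ENNReal.ofReal_one]
  have hcompl_ne_top : ∑ u, Sᶜ.indicator (fun u => ENNReal.ofReal (wp μ u)) u ≠ ⊤ :=
    ne_top_of_le_ne_top ENNReal.one_ne_top (htotal ▸ le_add_self)
  refine le_antisymm (hP.measure_take_preimage_le hμ.1 S) ?_
  rw [← ENNReal.add_le_add_iff_right hcompl_ne_top, htotal, ← measure_univ (μ := P)]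
  calc P univ ≤ P (take d ⁻¹' S) + P (take d ⁻¹' S)ᶜ := measure_univ_le_add_compl _
    _ ≤ _ := by gcongr; exact hP.measure_take_preimage_le hμ.1 Sᶜ

lemma IsIIDLaw.measure_add_measure_compl [Nonempty 𝒳] (hP : IsIIDLaw μ P) (hμ : IsPMF μ)
    {A : Set (ℕ → 𝒳)} {d : ℕ} (hA : DependsOn (· ∈ A) (Iio d)) : P A + P Aᶜ = 1 := by
  rw [← DependsOn.preimage_take hA, ← preimage_compl, hP.measure_take_preimage hμ,
    hP.measure_take_preimage hμ, ← Finset.sum_add_distrib]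
  simp_rw [indicator_self_add_compl_apply,
    ← ENNReal.ofReal_sum_of_nonneg fun u _ => wp_nonneg hμ.1 u, hμ.sum_wp, ENNReal.ofReal_one]

lemma IsIIDLaw.measure_inter_block_le [Nonempty 𝒳] (hP : IsIIDLaw μ P) (hμ : IsPMF μ)
    {d m : ℕ} {A : Set (ℕ → 𝒳)} (hA : DependsOn (· ∈ A) (Iio d))
    {B : (ℕ → 𝒳) → Set (Fin m → 𝒳)} (hB : DependsOn B (Iio d)) {c : ℝ≥0∞}
    (hc : ∀ x ∈ A, ∑ w, (B x).indicator (fun w => ENNReal.ofReal (wp μ w)) w ≤ c) :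
    P {x | x ∈ A ∧ seg x d m ∈ B x} ≤ P A * c := by
  set T : Set (Fin (d + m) → 𝒳) :=
    {u | extend (u ∘ Fin.castAdd m) ∈ A ∧ u ∘ Fin.natAdd d ∈ B (extend (u ∘ Fin.castAdd m))}
  have hE : {x | x ∈ A ∧ seg x d m ∈ B x} = take (d + m) ⁻¹' T := by
    ext x
    change _ ↔ extend (take d x) ∈ A ∧ seg x d m ∈ B (extend (take d x))
    rw [DependsOn.apply_extend_take hB,
      show (extend (take d x) ∈ A) = (x ∈ A) from DependsOn.apply_extend_take hA x]
    rfl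
  have hsplit : ∀ v w, T.indicator (fun u => ENNReal.ofReal (wp μ u)) (Fin.append v w)
      = {u | extend u ∈ A}.indicator (fun u => ENNReal.ofReal (wp μ u)) v
        * (B (extend v)).indicator (fun u => ENNReal.ofReal (wp μ u)) w := by
    intro v w
    simp only [indicator_apply, T, mem_ofPred_eq, Fin.append_left, Fin.append_right,
      Function.comp_def, wp_append, ENNReal.ofReal_mul (wp_nonneg hμ.1 v)]
    split_ifs <;> simp_all
  calc P {x | x ∈ A ∧ seg x d m ∈ B x}
      ≤ ∑ u, T.indicator (fun u => ENNReal.ofReal (wp μ u)) u :=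
        hE ▸ hP.measure_take_preimage_le hμ.1 T
    _ = ∑ v, {u | extend u ∈ A}.indicator (fun u => ENNReal.ofReal (wp μ u)) v
          * ∑ w, (B (extend v)).indicator (fun u => ENNReal.ofReal (wp μ u)) w := by
        rw [← (Fin.appendEquiv d m).sum_comp, Fintype.sum_prod_type]
        refine Finset.sum_congr rfl fun v _ => ?_
        rw [Finset.mul_sum]
        exact Finset.sum_congr rfl fun w _ => hsplit v w
    _ ≤ ∑ v, {u | extend u ∈ A}.indicator (fun u => ENNReal.ofReal (wp μ u)) v * c := by
        refine Finset.sum_le_sum fun v _ => ?_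
        by_cases hv : extend v ∈ A
        · exact mul_le_mul_right (hc _ hv) _
        · rw [indicator_of_notMem (show v ∉ {u | extend u ∈ A} from hv), zero_mul, zero_mul]
    _ = P A * c := by
        rw [← Finset.sum_mul, ← hP.measure_take_preimage hμ, DependsOn.preimage_take hA]

end IID

lemma nullMeasurableSet_of_measure_add_measure_compl {Ω : Type*} [MeasurableSpace Ω]
    {P : Measure Ω} [IsFiniteMeasure P] {A : Set Ω} (h : P A + P Aᶜ = P univ) :
    NullMeasurableSet A P := by
  set T := toMeasurable P A
  set T' := toMeasurable P Aᶜ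
  have hcover : T ∪ T' = univ := eq_univ_of_forall fun x =>
    (em (x ∈ A)).imp (subset_toMeasurable P A ·) (subset_toMeasurable P Aᶜ ·)
  have hTT' : P (T ∩ T') = 0 := by
    have := measure_union_add_inter (μ := P) T (measurableSet_toMeasurable P Aᶜ)
    rw [measure_toMeasurable, measure_toMeasurable, h, hcover] at this
    exact (ENNReal.add_right_inj (measure_ne_top P univ)).mp (by rwa [add_zero])
  have hTA : T =ᵐ[P] A := by
    refine ae_eq_set.mpr ⟨?_, ?_⟩
    · refine measure_mono_null (fun x hx => ?_) hTT'
      exact ⟨hx.1, subset_toMeasurable P Aᶜ hx.2⟩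
    · rw [sdiff_eq_empty.mpr (subset_toMeasurable P A), measure_empty]
  exact (measurableSet_toMeasurable P A).nullMeasurableSet.congr hTA

lemma tsum_ite_lt_le (n : ℕ∞) : ∑' k : ℕ, (if (k : ℕ∞) < n then 1 else 0 : ℝ≥0∞) ≤ n := by
  induction n using ENat.recTopCoe with
  | top => exact le_top
  | coe n =>
    rw [tsum_eq_sum (s := Finset.range n) fun k hk => by simp_all]
    simp only [Finset.sum_boole, Nat.cast_lt]
    exact_mod_cast (Finset.card_filter_le (Finset.range n) (· < n)).trans_eq (Finset.card_range n)

lemma tsum_measure_lt_le_lintegral {Ω : Type*} [MeasurableSpace Ω] {P : Measure Ω}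
    {N : Ω → ℕ∞} (hN : ∀ k : ℕ, NullMeasurableSet {x | (k : ℕ∞) < N x} P) :
    ∑' k : ℕ, P {x | (k : ℕ∞) < N x} ≤ ∫⁻ x, (N x : ℝ≥0∞) ∂P := by
  simp_rw [← lintegral_indicator_one₀ (hN _)]
  rw [← lintegral_tsum (f := fun k : ℕ => {x | (k : ℕ∞) < N x}.indicator 1)
    fun k => measurable_one.aemeasurable.indicator₀ (hN k)]
  refine lintegral_mono fun x => ?_
  simpa [indicator_apply] using tsum_ite_lt_le (N x)

lemma le_add_tsum_mul_of_forall_le {a b c : ℝ≥0∞} {p : ℕ → ℝ≥0∞} (hp : ∑' k, p k ≠ ⊤)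
    (h : ∀ n, c ≤ a + (∑ k ∈ Finset.range n, p k) * b + p n) : c ≤ a + (∑' k, p k) * b := by
  have hlim := (ENNReal.tendsto_atTop_zero_of_tsum_ne_top hp).const_add (a + (∑' k, p k) * b)
  rw [add_zero] at hlim
  refine ge_of_tendsto' hlim fun n => (h n).trans ?_
  gcongr
  exact ENNReal.sum_le_tsum _

lemma ofReal_div_le_tsum {p : ℕ → ℝ≥0∞} {ε K γ : ℝ} (hε : 0 ≤ ε) (hK : 0 ≤ K) (hγ : 0 < γ)
    (hp0 : p 0 = 1)
    (h : ∀ n, 1 ≤ ENNReal.ofReal ε + (∑ k ∈ Finset.range n, p k) * ENNReal.ofReal (K / γ) + p n) :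
    ENNReal.ofReal (γ / (K + ε * γ)) ≤ ∑' k, p k := by
  rcases eq_or_ne (∑' k, p k) ⊤ with htop | hfin
  · exact htop ▸ le_top
  have hS1 : 1 ≤ ∑' k, p k := hp0 ▸ ENNReal.le_tsum 0
  have hlim := le_add_tsum_mul_of_forall_le hfin h
  rw [← ENNReal.ofReal_toReal hfin] at hS1 hlim ⊢
  set s := (∑' k, p k).toReal
  rw [ENNReal.one_le_ofReal] at hS1
  rw [← ENNReal.ofReal_mul (by positivity), ← ENNReal.ofReal_add hε (by positivity),
    ENNReal.one_le_ofReal] at hlim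
  have hγ_le : γ ≤ s * (K + ε * γ) := calc
    γ = γ * 1 := (mul_one γ).symm
    _ ≤ γ * (ε + s * (K / γ)) := by gcongr
    _ = ε * γ + s * K := by field_simp
    _ ≤ s * ε * γ + s * K := by gcongr; exact le_mul_of_one_le_left hε hS1
    _ = s * (K + ε * γ) := by ring
  have hpos : 0 < K + ε * γ := by
    refine lt_of_le_of_ne (by positivity) fun h0 => ?_
    rw [← h0, mul_zero] at hγ_le
    linarith
  exact ENNReal.ofReal_le_ofReal ((div_le_iff₀ hpos).mpr hγ_le)

def alarmWords (L : (n : ℕ) → (Fin n → 𝒳) → ℕ) (ν : 𝒳 → ℝ) (lam γ : ℝ) (m : ℕ) :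
    Set (Fin m → 𝒳) :=
  {w | Real.logb 2 γ ≤ -(L m w : ℝ) - Real.logb 2 (wp ν w) - m * lam}

section CodeBound

variable {L : (n : ℕ) → (Fin n → 𝒳) → ℕ} {μ ν : 𝒳 → ℝ} {β lam γ : ℝ}

lemma wp_le_of_mem_alarmWords (hμ : ∀ a, 0 ≤ μ a) (hν : ∀ a, 0 < ν a)
    (hμν : ∀ a, μ a ≤ β * ν a) (hβ : 0 ≤ β) (hγ : 0 < γ) {m : ℕ} {w : Fin m → 𝒳}
    (hw : w ∈ alarmWords L ν lam γ m) :
    wp μ w ≤ (β * 2 ^ (-lam)) ^ m / γ * 2 ^ (-(L m w : ℝ)) := by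
  have hγν : γ * wp ν w ≤ 2 ^ (-(L m w : ℝ) - m * lam) := by
    rw [← Real.logb_le_iff_le_rpow one_lt_two (mul_pos hγ (wp_pos hν w)),
      Real.logb_mul hγ.ne' (wp_pos hν w).ne']
    rw [alarmWords, mem_ofPred_eq] at hw
    linarith
  have hsplit : (2 : ℝ) ^ (-(L m w : ℝ) - m * lam) = (2 ^ (-lam)) ^ m * 2 ^ (-(L m w : ℝ)) := by
    rw [← Real.rpow_natCast, ← Real.rpow_mul zero_le_two, ← Real.rpow_add two_pos]
    ring_nf
  calc wp μ w ≤ β ^ m * wp ν w := wp_le_pow_mul_wp hμ hμν w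
    _ ≤ β ^ m * (2 ^ (-(L m w : ℝ) - m * lam) / γ) := by
        gcongr
        rwa [le_div_iff₀ hγ, mul_comm]
    _ = (β * 2 ^ (-lam)) ^ m / γ * 2 ^ (-(L m w : ℝ)) := by
        rw [hsplit, mul_pow]
        ring

lemma sum_indicator_alarmWords_le [Fintype 𝒳] (hL : Kraft L) (hμ : ∀ a, 0 ≤ μ a)
    (hν : ∀ a, 0 < ν a) (hμν : ∀ a, μ a ≤ β * ν a) (hβ : 0 ≤ β) (hγ : 0 < γ) (m : ℕ) :
    ∑ w, (alarmWords L ν lam γ m).indicator (fun w => ENNReal.ofReal (wp μ w)) w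
      ≤ ENNReal.ofReal ((β * 2 ^ (-lam)) ^ m / γ) := by
  calc ∑ w, (alarmWords L ν lam γ m).indicator (fun w => ENNReal.ofReal (wp μ w)) w
      ≤ ∑ w, ENNReal.ofReal ((β * 2 ^ (-lam)) ^ m / γ * 2 ^ (-(L m w : ℝ))) := by
        refine Finset.sum_le_sum fun w _ => ?_
        by_cases hw : w ∈ alarmWords L ν lam γ m
        · rw [indicator_of_mem hw]
          exact ENNReal.ofReal_le_ofReal (wp_le_of_mem_alarmWords hμ hν hμν hβ hγ hw)
        · rw [indicator_of_notMem hw]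
          exact zero_le
    _ = ENNReal.ofReal ((β * 2 ^ (-lam)) ^ m / γ * ∑ w, (2 : ℝ) ^ (-(L m w : ℝ))) := by
        rw [← ENNReal.ofReal_sum_of_nonneg fun w _ => by positivity, Finset.mul_sum]
    _ ≤ ENNReal.ofReal ((β * 2 ^ (-lam)) ^ m / γ) :=
        ENNReal.ofReal_le_ofReal (mul_le_of_le_one_right (by positivity) (hL m))

end CodeBound

section CUSUM

variable {L : (n : ℕ) → (Fin n → 𝒳) → ℕ} {lam γ : ℝ} {s : ℕ}

lemma exists_eq_Mstop_of_ne_top {ν : 𝒳 → ℝ} {x : ℕ → 𝒳} (h : Mstop L ν lam γ s x ≠ ⊤) :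
    ∃ j : ℕ, Mstop L ν lam γ s x = j ∧ 1 ≤ j ∧
      ∃ k < j, Real.logb 2 γ ≤ cstat L ν lam s x k j := by
  have hne : {m : ℕ∞ | ∃ n : ℕ, m = n ∧ 1 ≤ n ∧
      ∃ k < n, Real.logb 2 γ ≤ cstat L ν lam s x k n}.Nonempty :=
    nonempty_iff_ne_empty.mpr fun he => h (by rw [Mstop, he, sInf_empty])
  exact csInf_mem hne

lemma Mstop_le_iff {ν : 𝒳 → ℝ} {x : ℕ → 𝒳} {n : ℕ} :
    Mstop L ν lam γ s x ≤ n ↔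
      ∃ j ≤ n, 1 ≤ j ∧ ∃ k < j, Real.logb 2 γ ≤ cstat L ν lam s x k j := by
  constructor
  · intro h
    obtain ⟨j, hj, hj1, hk⟩ :=
      exists_eq_Mstop_of_ne_top (ne_top_of_le_ne_top (ENat.natCast_ne_top n) h)
    rw [hj] at h
    exact ⟨j, by exact_mod_cast h, hj1, hk⟩
  · rintro ⟨j, hjn, hj1, hk⟩
    rw [Mstop]
    exact le_trans (sInf_le ⟨j, rfl, hj1, hk⟩) (by exact_mod_cast hjn)

lemma cstat_le_stat {ν : 𝒳 → ℝ} {x : ℕ → 𝒳} (hlam : 0 ≤ lam) (k j : ℕ) :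
    cstat L ν lam s x k j ≤ stat L ν lam (s + k) x (j - k) := by
  have : ((j - k : ℕ) : ℝ) ≤ j := by exact_mod_cast Nat.sub_le j k
  unfold cstat stat
  nlinarith

lemma dependsOn_Mstop_le {ν : (ℕ → 𝒳) → 𝒳 → ℝ} (hν : DependsOn ν (Iio s)) (n : ℕ) :
    DependsOn (fun x => Mstop L (ν x) lam γ s x ≤ n) (Iio (s + n)) := by
  intro x y h
  simp only [Mstop_le_iff, cstat]
  refine propext <| exists_congr fun j => and_congr_right fun hjn => and_congr_right fun _ =>
    exists_congr fun k => and_congr_right fun hkj => ?_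
  have hseg : seg x (s + k) (j - k) = seg y (s + k) (j - k) :=
    dependsOn_seg (s + k) (j - k) fun i hi => h i (by simp only [mem_Iio] at hi ⊢; omega)
  rw [hν fun i hi => h i (by simp only [mem_Iio] at hi ⊢; omega), hseg]

lemma dependsOn_lt_Mstop {ν : (ℕ → 𝒳) → 𝒳 → ℝ} (hν : DependsOn ν (Iio s)) (n : ℕ) :
    DependsOn (fun x => (n : ℕ∞) < Mstop L (ν x) lam γ s x) (Iio (s + n)) := fun x y h => by
  simp only [← not_le]
  exact congrArg Not (dependsOn_Mstop_le hν n h)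

lemma setOf_Mstop_le_subset (hlam : 0 ≤ lam) (ν : (ℕ → 𝒳) → 𝒳 → ℝ) (G : Set (ℕ → 𝒳)) (n : ℕ) :
    {x | Mstop L (ν x) lam γ s x ≤ n} ⊆ Gᶜ ∪
      ⋃ k ∈ Finset.range n, ⋃ m ∈ Finset.Ico 1 (n + 1),
        {x | x ∈ {x | (k : ℕ∞) < Mstop L (ν x) lam γ s x} ∩ G ∧
          seg x (s + k) m ∈ alarmWords L (ν x) lam γ m} := by
  intro x hx
  by_cases hG : x ∉ G
  · exact Or.inl hG
  rw [not_not] at hG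
  change Mstop L (ν x) lam γ s x ≤ n at hx
  obtain ⟨j, hj, hj1, k, hkj, hk⟩ :=
    exists_eq_Mstop_of_ne_top (ne_top_of_le_ne_top (ENat.natCast_ne_top n) hx)
  have hjn : j ≤ n := by rw [hj] at hx; exact_mod_cast hx
  refine Or.inr (mem_biUnion (x := k) (Finset.mem_range.mpr (by omega)) <|
    mem_biUnion (x := j - k) (Finset.mem_Ico.mpr (by omega)) ⟨⟨?_, hG⟩, ?_⟩)
  · show (k : ℕ∞) < Mstop L (ν x) lam γ s x
    rw [hj]
    exact_mod_cast hkj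
  · exact hk.trans (cstat_le_stat hlam k j)

variable [Fintype 𝒳] [MeasurableSpace 𝒳] [Nonempty 𝒳] {μ : 𝒳 → ℝ} {P : Measure (ℕ → 𝒳)}

theorem IsIIDLaw.measure_Mstop_le_le (hP : IsIIDLaw μ P) (hμ : IsPMF μ) (hL : Kraft L)
    {ν : (ℕ → 𝒳) → 𝒳 → ℝ} (hν : DependsOn ν (Iio s)) (hlam : 0 ≤ lam) (hγ : 0 < γ) {β : ℝ}
    (hβ : 0 ≤ β) (n : ℕ) :
    P {x | Mstop L (ν x) lam γ s x ≤ n} ≤ P {x | ∀ a, 0 < ν x a ∧ μ a ≤ β * ν x a}ᶜ +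
      (∑ k ∈ Finset.range n, P {x | (k : ℕ∞) < Mstop L (ν x) lam γ s x}) *
        ENNReal.ofReal ((∑ m ∈ Finset.Ico 1 (n + 1), (β * 2 ^ (-lam)) ^ m) / γ) := by
  set G := {x | ∀ a, 0 < ν x a ∧ μ a ≤ β * ν x a}
  have hGdep : ∀ d, s ≤ d → DependsOn (· ∈ G) (Iio d) := fun d hd x y h => by
    show (∀ a, 0 < ν x a ∧ _) = (∀ a, 0 < ν y a ∧ _)
    rw [hν fun i hi => h i (by simp only [mem_Iio] at hi ⊢; omega)]
  have hblock : ∀ k m : ℕ,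
      P {x | x ∈ {x | (k : ℕ∞) < Mstop L (ν x) lam γ s x} ∩ G ∧
          seg x (s + k) m ∈ alarmWords L (ν x) lam γ m}
        ≤ P {x | (k : ℕ∞) < Mstop L (ν x) lam γ s x} *
          ENNReal.ofReal ((β * 2 ^ (-lam)) ^ m / γ) := by
    intro k m
    refine (hP.measure_inter_block_le hμ ?_ ?_ ?_).trans (by gcongr; exact inter_subset_left)
    · exact fun x y h => congrArg₂ And (dependsOn_lt_Mstop hν k h) (hGdep _ (by omega) h)
    · intro x y h
      show alarmWords L (ν x) lam γ m = alarmWords L (ν y) lam γ m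
      rw [hν fun i hi => h i (by simp only [mem_Iio] at hi ⊢; omega)]
    · rintro x ⟨-, hx⟩
      exact sum_indicator_alarmWords_le hL hμ.1 (fun a => (hx a).1) (fun a => (hx a).2) hβ hγ m
  calc P {x | Mstop L (ν x) lam γ s x ≤ n}
      ≤ P Gᶜ + ∑ k ∈ Finset.range n, ∑ m ∈ Finset.Ico 1 (n + 1),
          P {x | x ∈ {x | (k : ℕ∞) < Mstop L (ν x) lam γ s x} ∩ G ∧
            seg x (s + k) m ∈ alarmWords L (ν x) lam γ m} := by
        refine (measure_mono (setOf_Mstop_le_subset hlam ν G n)).trans <|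
          (measure_union_le _ _).trans (add_le_add le_rfl ?_)
        exact (measure_biUnion_finset_le _ _).trans
          (Finset.sum_le_sum fun k _ => measure_biUnion_finset_le _ _)
    _ ≤ P Gᶜ + ∑ k ∈ Finset.range n, ∑ m ∈ Finset.Ico 1 (n + 1),
          P {x | (k : ℕ∞) < Mstop L (ν x) lam γ s x} *
            ENNReal.ofReal ((β * 2 ^ (-lam)) ^ m / γ) := by
        gcongr with k _ m _
        exact hblock k m
    _ = _ := by
        simp_rw [← Finset.mul_sum, Finset.sum_mul]
        rw [← ENNReal.ofReal_sum_of_nonneg fun m _ => by positivity, Finset.sum_div]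

theorem IsIIDLaw.ofReal_le_lexp_Mstop (hP : IsIIDLaw μ P) (hμ : IsPMF μ) (hL : Kraft L)
    {ν : (ℕ → 𝒳) → 𝒳 → ℝ} (hν : DependsOn ν (Iio s)) (hlam : 0 ≤ lam) (hγ : 0 < γ)
    {β ε : ℝ} (hβ : 0 ≤ β) (hr : β * 2 ^ (-lam) < 1) (hε : 0 ≤ ε)
    (hgood : P {x | ∀ a, 0 < ν x a ∧ μ a ≤ β * ν x a}ᶜ ≤ ENNReal.ofReal ε) :
    ENNReal.ofReal (γ / (β * 2 ^ (-lam) / (1 - β * 2 ^ (-lam)) + ε * γ))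
      ≤ lexp P (fun x => Mstop L (ν x) lam γ s x) := by
  have := hP.1
  set r := β * (2 : ℝ) ^ (-lam)
  have hr0 : 0 ≤ r := by positivity
  have hcompl (n : ℕ) : P {x | (n : ℕ∞) < Mstop L (ν x) lam γ s x}
      + P {x | Mstop L (ν x) lam γ s x ≤ n} = 1 := by
    have hc : {x | (n : ℕ∞) < Mstop L (ν x) lam γ s x}ᶜ = {x | Mstop L (ν x) lam γ s x ≤ n} := by
      ext x
      simp
    rw [← hc]
    exact hP.measure_add_measure_compl hμ (dependsOn_lt_Mstop hν n)
  have hrenewal (n : ℕ) : 1 ≤ ENNReal.ofReal ε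
      + (∑ k ∈ Finset.range n, P {x | (k : ℕ∞) < Mstop L (ν x) lam γ s x})
        * ENNReal.ofReal (r / (1 - r) / γ) + P {x | (n : ℕ∞) < Mstop L (ν x) lam γ s x} := by
    rw [← hcompl n, add_comm]
    gcongr
    refine (hP.measure_Mstop_le_le hμ hL hν hlam hγ hβ n).trans ?_
    gcongr
    simpa using geom_sum_Ico_le_of_lt_one (m := 1) (n := n + 1) hr0 hr
  have hstart : P {x | ((0 : ℕ) : ℕ∞) < Mstop L (ν x) lam γ s x} = 1 := by
    have hnone : {x | Mstop L (ν x) lam γ s x ≤ (0 : ℕ)} = ∅ :=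
      eq_empty_of_forall_notMem fun x hx => by
        obtain ⟨j, hj0, hj1, -⟩ := Mstop_le_iff.mp hx
        omega
    simpa only [hnone, measure_empty, add_zero] using hcompl 0
  refine (ofReal_div_le_tsum hε (div_nonneg hr0 (by linarith)) hγ hstart hrenewal).trans ?_
  exact tsum_measure_lt_le_lintegral fun k => nullMeasurableSet_of_measure_add_measure_compl <|
    by rw [measure_univ]; exact hP.measure_add_measure_compl hμ (dependsOn_lt_Mstop hν k)

end CUSUM

lemma pos_and_le_mul_of_abs_sub_lt {pmin δ p q : ℝ} (hp : pmin ≤ p) (hδ0 : 0 < δ) (hδ : δ < pmin)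
    (hpq : |q - p| < δ) : 0 < q ∧ p ≤ pmin / (pmin - δ) * q := by
  have hq := (abs_lt.mp hpq).1
  refine ⟨by linarith, ?_⟩
  rw [div_mul_eq_mul_div, le_div_iff₀ (by linarith)]
  nlinarith

theorem stmt10_general {𝒳 : Type} [Fintype 𝒳] [Nonempty 𝒳] [MeasurableSpace 𝒳]
    (μ0 : 𝒳 → ℝ) (hμ0 : IsPosPMF μ0)
    (L : (n : ℕ) → (Fin n → 𝒳) → ℕ) (hL : Kraft L)
    (pmin δ : ℝ) (hpmin : IsLeast (Set.range μ0) pmin)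
    (hδ0 : 0 < δ) (hδ : δ < pmin)
    (n0 : ℕ)
    (ε0 : ℝ) (hε0 : ε0 ∈ Set.Ioo (0 : ℝ) 1)
    (γ lam : ℝ) (hγ : 1 < γ) (hlam : Real.logb 2 (pmin / (pmin - δ)) < lam)
    (P : Measure (ℕ → 𝒳)) (hP : IsIIDLaw μ0 P)
    (hdev : P {x | ∃ a, δ ≤ |emp n0 x a - μ0 a|} ≤ ENNReal.ofReal ε0) :
    ENNReal.ofReal
        (γ / (1 / ((2 : ℝ) ^ (lam - Real.logb 2 (pmin / (pmin - δ))) - 1) + ε0 * γ))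
      ≤ lexp P (fun x => Mstop L (emp n0 x) lam γ n0 x) := by
  have hpmin0 : 0 < pmin := by
    obtain ⟨a, ha⟩ := hpmin.1
    exact ha ▸ hμ0.1 a
  set β := pmin / (pmin - δ)
  have hβ1 : 1 < β := (one_lt_div (by linarith)).mpr (by linarith)
  have hr : β * 2 ^ (-lam) < 1 := by
    rw [← Real.rpow_logb two_pos (by norm_num) (by linarith : 0 < β), ← Real.rpow_add two_pos]
    exact Real.rpow_lt_one_of_one_lt_of_neg one_lt_two (by linarith)
  have hK : 1 / ((2 : ℝ) ^ (lam - Real.logb 2 β) - 1) = β * 2 ^ (-lam) / (1 - β * 2 ^ (-lam)) := by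
    rw [Real.rpow_sub two_pos, Real.rpow_logb two_pos (by norm_num) (by linarith),
      Real.rpow_neg zero_le_two]
    field_simp
  have hgood : P {x | ∀ a, 0 < emp n0 x a ∧ μ0 a ≤ β * emp n0 x a}ᶜ ≤ ENNReal.ofReal ε0 := by
    refine (measure_mono fun x hx => ?_).trans hdev
    obtain ⟨a, ha⟩ := not_forall.mp hx
    exact ⟨a, not_lt.mp fun h => ha (pos_and_le_mul_of_abs_sub_lt (hpmin.2 ⟨a, rfl⟩) hδ0 hδ h)⟩
  rw [hK]
  exact hP.ofReal_le_lexp_Mstop ⟨fun a => (hμ0.1 a).le, hμ0.2⟩ hL (dependsOn_emp n0)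
    ((Real.logb_pos one_lt_two hβ1).trans hlam).le (by linarith) (by linarith) hr hε0.1.le hgood

/-- mean time to false alarm of the modified CUSUM test that uses the
empirical pre-change distribution:
`E₀(M(γ)) ≥ γ / (1/(2^{λ − log₂ β} − 1) + ε0 γ)`. -/
theorem stmt10 {𝒳 : Type} [Fintype 𝒳] [Nonempty 𝒳] [MeasurableSpace 𝒳]
    (μ0 : 𝒳 → ℝ) (hμ0 : IsPosPMF μ0)
    (L : (n : ℕ) → (Fin n → 𝒳) → ℕ) (hL : Kraft L)
    (pmin δ : ℝ) (hpmin : IsLeast (Set.range μ0) pmin)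
    (hδ0 : 0 < δ) (hδ : δ < pmin)
    (n0 : ℕ) (hn0 : 1 ≤ n0)
    (ε0 : ℝ) (hε0 : ε0 ∈ Set.Ioo (0 : ℝ) 1)
    (γ lam : ℝ) (hγ : 1 < γ) (hlam : Real.logb 2 (pmin / (pmin - δ)) < lam)
    (P : Measure (ℕ → 𝒳)) (hP : IsIIDLaw μ0 P)
    (hdev : P {x | ∃ a, δ ≤ |emp n0 x a - μ0 a|} ≤ ENNReal.ofReal ε0) :
    ENNReal.ofReal
        (γ / (1 / ((2 : ℝ) ^ (lam - Real.logb 2 (pmin / (pmin - δ))) - 1) + ε0 * γ))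
      ≤ lexp P (fun x => Mstop L (emp n0 x) lam γ n0 x) :=
  stmt10_general μ0 hμ0 L hL pmin δ hpmin hδ0 hδ n0 ε0 hε0 γ lam hγ hlam P hP hdev

end ChangeDetect
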